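/- Let b : ℝ → ℝ be continuous, let γ, k ∈ ℝ, and let φ : ℝ → ℝ be twice continuously differentiable with φ(x) > 0 for all x ∈ ℝ, satisfying φ''(x) + b(x)φ'(x) + γ b(x)φ(x) = k φ(x) for all x ∈ ℝ. Then either φ'(x) + γφ(x) = 0 for all x ∈ ℝ, or the set {x ∈ ℝ : φ'(x) + γφ(x) = 0} contains at most one point. -/

import Mathlib

/-!
With `ψ = φ' + γ φ` the equation becomes `ψ' = (γ - b) ψ + (k - γ²) φ`. If `k = γ²` this is a
linear first-order equation, so `ψ` vanishes everywhere as soon as it vanishes once. Otherwise,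
since `φ > 0`, at every zero of `ψ` its derivative `(k - γ²) φ` has the fixed sign of `k - γ²`,
so `ψ` crosses zero in one direction only and can do so at most once.
-/

lemma nonneg_of_hasDerivAt_pos_of_eq_zero {ψ ψ' : ℝ → ℝ} (hψ : ∀ x, HasDerivAt ψ (ψ' x) x)
    (hpos : ∀ x, ψ x = 0 → 0 < ψ' x) {a x : ℝ} (ha : ψ a = 0) (hax : a ≤ x) : 0 ≤ ψ x := by
  have h := image_le_of_deriv_right_lt_deriv_boundary (f := fun x => -ψ x) (f' := fun x => -ψ' x)
    (B := fun _ => 0) (B' := fun _ => 0)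
    (fun y _ => (hψ y).continuousAt.neg.continuousWithinAt)
    (fun y _ => (hψ y).neg.hasDerivWithinAt) (by simp [ha]) (fun _ => hasDerivAt_const _ _)
    (fun y _ hy => by simpa using hpos y (neg_eq_zero.mp hy)) ⟨hax, le_rfl⟩
  simpa using h

lemma subsingleton_zeros_of_hasDerivAt_pos {ψ ψ' : ℝ → ℝ} (hψ : ∀ x, HasDerivAt ψ (ψ' x) x)
    (hpos : ∀ x, ψ x = 0 → 0 < ψ' x) : {x | ψ x = 0}.Subsingleton := by
  have not_lt_of_zeros : ∀ {x₁ x₂}, ψ x₁ = 0 → ψ x₂ = 0 → ¬x₁ < x₂ := by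
    intro x₁ x₂ h₁ h₂ hlt
    have hmin : IsLocalMin ψ x₂ := by
      filter_upwards [Ioi_mem_nhds hlt] with x hx
      rw [h₂]
      exact nonneg_of_hasDerivAt_pos_of_eq_zero hψ hpos h₁ hx.le
    exact (hpos x₂ h₂).ne' (hmin.hasDerivAt_eq_zero (hψ x₂))
  intro x₁ h₁ x₂ h₂
  exact le_antisymm (le_of_not_gt (not_lt_of_zeros h₂ h₁)) (le_of_not_gt (not_lt_of_zeros h₁ h₂))

lemma subsingleton_zeros_of_hasDerivAt_neg {ψ ψ' : ℝ → ℝ} (hψ : ∀ x, HasDerivAt ψ (ψ' x) x)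
    (hneg : ∀ x, ψ x = 0 → ψ' x < 0) : {x | ψ x = 0}.Subsingleton := by
  simpa using subsingleton_zeros_of_hasDerivAt_pos (fun x => (hψ x).neg)
    (fun x hx => neg_pos.mpr (hneg x (neg_eq_zero.mp hx)))

/-- Integrating factor: `ψ · exp (-∫ a)` is constant. -/
lemma eq_zero_of_hasDerivAt_eq_mul_of_eq_zero {a ψ : ℝ → ℝ} (ha : Continuous a)
    (hψ : ∀ x, HasDerivAt ψ (a x * ψ x) x) {x₀ : ℝ} (h₀ : ψ x₀ = 0) (x : ℝ) : ψ x = 0 := by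
  set A : ℝ → ℝ := fun x => ∫ t in (0 : ℝ)..x, a t
  have hA : ∀ x, HasDerivAt A (a x) x := fun x => (ha.integral_hasStrictDerivAt 0 x).hasDerivAt
  have hconst : ∀ x, HasDerivAt (fun x => ψ x * Real.exp (-A x)) 0 x := fun x =>
    ((hψ x).mul (hA x).neg.exp).congr_deriv (by ring)
  have h := is_const_of_deriv_eq_zero (fun y => (hconst y).differentiableAt)
    (fun y => (hconst y).deriv) x x₀
  simpa [h₀, Real.exp_ne_zero] using h

lemma hasDerivAt_deriv_add_const_mul {b φ : ℝ → ℝ} {γ k : ℝ} (hφ : ContDiff ℝ 2 φ)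
    (heq : ∀ x, deriv (deriv φ) x + b x * deriv φ x + γ * b x * φ x = k * φ x) (x : ℝ) :
    HasDerivAt (fun x => deriv φ x + γ * φ x)
      ((γ - b x) * (deriv φ x + γ * φ x) + (k - γ ^ 2) * φ x) x := by
  have hφ' : Differentiable ℝ (deriv φ) :=
    (hφ.iterate_deriv' 1 1).differentiable one_ne_zero
  exact ((hφ' x).hasDerivAt.add ((hφ.differentiable two_ne_zero x).hasDerivAt.const_mul γ)
    ).congr_deriv (by linear_combination heq x)

theorem stmt0 (b : ℝ → ℝ) (γ k : ℝ) (φ : ℝ → ℝ)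
    (hb : Continuous b) (hφ : ContDiff ℝ 2 φ) (hφpos : ∀ x, 0 < φ x)
    (heq : ∀ x : ℝ,
      deriv (deriv φ) x + b x * deriv φ x + γ * b x * φ x = k * φ x) :
    (∀ x : ℝ, deriv φ x + γ * φ x = 0) ∨
      {x : ℝ | deriv φ x + γ * φ x = 0}.Subsingleton := by
  have hψ := hasDerivAt_deriv_add_const_mul hφ heq
  rcases lt_trichotomy (k - γ ^ 2) 0 with hc | hc | hc
  · refine .inr (subsingleton_zeros_of_hasDerivAt_neg hψ fun x hx => ?_)
    simpa [hx] using mul_neg_of_neg_of_pos hc (hφpos x)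
  · by_cases hzero : ∃ x₀, deriv φ x₀ + γ * φ x₀ = 0
    · obtain ⟨x₀, hx₀⟩ := hzero
      refine .inl (eq_zero_of_hasDerivAt_eq_mul_of_eq_zero (a := fun x => γ - b x)
        (by fun_prop) (fun x => ?_) hx₀)
      simpa [hc] using hψ x
    · exact .inr fun x hx => (hzero ⟨x, hx⟩).elim
  · refine .inr (subsingleton_zeros_of_hasDerivAt_pos hψ fun x hx => ?_)
    simpa [hx] using mul_pos hc (hφpos x)
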